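/- Let Y be a pointed metric space, W a Banach space, and T : Y → W Lipschitz with T(0)=0. If T is MS-Lipschitz p-nuclear, then T is (Cohen) Lipschitz p-nuclear, i.e. there is K > 0 such that for all finite families x_l, y_l ∈ Y and a_l* ∈ W*: |Σ_l ⟨T x_l − T y_l, a_l*⟩| ≤ K sup_{f ∈ B_{Y^#}} (Σ_l |f(x_l) − f(y_l)|^p)^{1/p} · sup_{a ∈ B_{W**}...} (Σ_l |⟨a_l*, a⟩|^{p*})^{1/p*} where the last factor is ‖(a_l*)‖_{ℓ_{p*}^{k,w}(W*)}. -/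

import Mathlib

/-!
Since `W` is a Banach space, the identity of `W` linearizes to the barycenter map
`β : F(W) → W` with `β ∘ δ = id` and `‖β‖ ≤ 1`; hence `a ↦ a ∘ β` embeds `W*` into
`W^# = F(W)*` contractively and compatibly with evaluation at points of `W`. Testing the
MS-nuclear inequality on `f_l = a_l ∘ β` and bounding `w_p` by the representation
`Σ (δ x_l - δ y_l) ⊗ f_l` gives the claim: the weak `ℓ_p` norm of the molecules is dominated
by the supremum over the unit ball of `Lip₀(Y)`, and a contraction does not increase weak
`ℓ_{p*}` norms.
-/

open scoped TensorProduct
open NormedSpace Finset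

noncomputable section

/-- The strong `ℓ_p^m` norm of a finite family in a normed space. -/
def strongLp {E : Type*} [NormedAddCommGroup E] (p : ℝ) {m : ℕ} (x : Fin m → E) : ℝ :=
  (∑ j, ‖x j‖ ^ p) ^ (1 / p)

/-- The weak `ℓ_p^{m,w}` norm of a finite family in a normed space. -/
def weakLp {E : Type*} [NormedAddCommGroup E] [NormedSpace ℝ E] (p : ℝ) {m : ℕ}
    (x : Fin m → E) : ℝ :=
  sSup {r : ℝ | ∃ φ : StrongDual ℝ E, ‖φ‖ ≤ 1 ∧ r = (∑ j, |φ (x j)| ^ p) ^ (1 / p)}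

/-- A continuous linear operator is `p`-summing. -/
def IsPSumming {E F : Type*} [NormedAddCommGroup E] [NormedSpace ℝ E]
    [NormedAddCommGroup F] [NormedSpace ℝ F] (p : ℝ) (u : E →L[ℝ] F) : Prop :=
  ∃ K > 0, ∀ (m : ℕ) (x : Fin m → E),
    strongLp p (fun j => u (x j)) ≤ K * weakLp p x

/-- A continuous linear operator is (Cohen) strongly `p`-summing (`q` is the conjugate of `p`). -/
def IsStronglyPSumming {E F : Type*} [NormedAddCommGroup E] [NormedSpace ℝ E]
    [NormedAddCommGroup F] [NormedSpace ℝ F] (p q : ℝ) (u : E →L[ℝ] F) : Prop :=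
  ∃ K > 0, ∀ (m : ℕ) (x : Fin m → E) (φ : Fin m → StrongDual ℝ F),
    ∑ j, |φ j (u (x j))| ≤ K * strongLp p x * weakLp q φ

/-- A continuous linear operator is (Cohen) `p`-nuclear (`q` is the conjugate of `p`). -/
def IsPNuclear {E F : Type*} [NormedAddCommGroup E] [NormedSpace ℝ E]
    [NormedAddCommGroup F] [NormedSpace ℝ F] (p q : ℝ) (u : E →L[ℝ] F) : Prop :=
  ∃ K > 0, ∀ (m : ℕ) (x : Fin m → E) (φ : Fin m → StrongDual ℝ F),
    ∑ j, |φ j (u (x j))| ≤ K * weakLp p x * weakLp q φ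

/-- The Chevet–Saphar norm `d_p` on a tensor product (`q` is the conjugate of `p`):
infimum over all finite representations of `z`. -/
def dpNorm {E G : Type*} [NormedAddCommGroup E] [NormedSpace ℝ E]
    [NormedAddCommGroup G] [NormedSpace ℝ G] (p q : ℝ) (z : TensorProduct ℝ E G) : ℝ :=
  sInf {r : ℝ | ∃ (m : ℕ) (n : Fin m → E) (h : Fin m → G),
    z = ∑ j, n j ⊗ₜ[ℝ] h j ∧ r = weakLp p n * strongLp q h}

/-- The Chevet–Saphar norm `g_p` on a tensor product (`q` is the conjugate of `p`). -/
def gpNorm {E G : Type*} [NormedAddCommGroup E] [NormedSpace ℝ E]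
    [NormedAddCommGroup G] [NormedSpace ℝ G] (p q : ℝ) (z : TensorProduct ℝ E G) : ℝ :=
  sInf {r : ℝ | ∃ (m : ℕ) (n : Fin m → E) (h : Fin m → G),
    z = ∑ j, n j ⊗ₜ[ℝ] h j ∧ r = strongLp p n * weakLp q h}

/-- The tensor norm `w_p` (`q` is the conjugate of `p`). -/
def wpNorm {E G : Type*} [NormedAddCommGroup E] [NormedSpace ℝ E]
    [NormedAddCommGroup G] [NormedSpace ℝ G] (p q : ℝ) (z : TensorProduct ℝ E G) : ℝ :=
  sInf {r : ℝ | ∃ (m : ℕ) (n : Fin m → E) (h : Fin m → G),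
    z = ∑ j, n j ⊗ₜ[ℝ] h j ∧ r = weakLp p n * weakLp q h}

/-- `E`, together with the map `δ : Y → E`, is (isometrically) the Lipschitz-free space
of the pointed metric space `(Y, y₀)`: `δ` sends the base point to `0`, is an isometric
embedding, has dense linear span, and the norm of finite combinations of point evaluations
is computed against the unit ball of `Lip₀(Y)`. -/
structure IsFreeSpace (Y : Type*) [MetricSpace Y] (y₀ : Y)
    (E : Type*) [NormedAddCommGroup E] [NormedSpace ℝ E] [CompleteSpace E]
    (δ : Y → E) : Prop where
  map_base : δ y₀ = 0
  isometry : ∀ x y : Y, ‖δ x - δ y‖ = dist x y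
  dense_span : (Submodule.span ℝ (Set.range δ)).topologicalClosure = ⊤
  norm_eq : ∀ (n : ℕ) (a : Fin n → ℝ) (x : Fin n → Y),
    ‖∑ i, a i • δ (x i)‖ =
      sSup {r : ℝ | ∃ s : Y → ℝ, LipschitzWith 1 s ∧ s y₀ = 0 ∧ r = |∑ i, a i * s (x i)|}

end

noncomputable section

variable {Y W FY FW : Type*} [MetricSpace Y] [MetricSpace W]
  [NormedAddCommGroup FY] [NormedSpace ℝ FY] [NormedAddCommGroup FW] [NormedSpace ℝ FW]

/-- `T : Y → W` is MS-Lipschitz `p`-summing (`q` is the conjugate of `p`), the free spaces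
of `Y` and `W` being realized as `FY`, `FW` via `δY`, `δW`.  Elements of `W^# = F(W)^*` are
encoded as elements of `StrongDual ℝ FW`, and `d_p^L` is the Chevet–Saphar norm computed in
`F(Y) ⊗ W^#`. -/
def MSLipPSumming (p q : ℝ) (δY : Y → FY) (δW : W → FW) (T : Y → W) : Prop :=
  ∃ K > 0, ∀ (k : ℕ) (x y : Fin k → Y) (f : Fin k → StrongDual ℝ FW),
    |∑ l, (f l (δW (T (x l))) - f l (δW (T (y l))))| ≤
      K * dpNorm p q (∑ l, (δY (x l) - δY (y l)) ⊗ₜ[ℝ] f l)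

/-- `T : Y → W` is MS-strongly Lipschitz `p`-summing (`q` is the conjugate of `p`). -/
def MSStronglyLipPSumming (p q : ℝ) (δY : Y → FY) (δW : W → FW) (T : Y → W) : Prop :=
  ∃ K > 0, ∀ (k : ℕ) (x y : Fin k → Y) (f : Fin k → StrongDual ℝ FW),
    |∑ l, (f l (δW (T (x l))) - f l (δW (T (y l))))| ≤
      K * gpNorm p q (∑ l, (δY (x l) - δY (y l)) ⊗ₜ[ℝ] f l)

/-- `T : Y → W` is MS-Lipschitz `p`-nuclear (`q` is the conjugate of `p`). -/
def MSLipPNuclear (p q : ℝ) (δY : Y → FY) (δW : W → FW) (T : Y → W) : Prop :=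
  ∃ K > 0, ∀ (k : ℕ) (x y : Fin k → Y) (f : Fin k → StrongDual ℝ FW),
    |∑ l, (f l (δW (T (x l))) - f l (δW (T (y l))))| ≤
      K * wpNorm p q (∑ l, (δY (x l) - δY (y l)) ⊗ₜ[ℝ] f l)

end

section WeakLp

variable {E F : Type*} [NormedAddCommGroup E] [NormedSpace ℝ E]
  [NormedAddCommGroup F] [NormedSpace ℝ F]

theorem weakLp_nonneg (p : ℝ) {m : ℕ} (x : Fin m → E) : 0 ≤ weakLp p x :=
  Real.sSup_nonneg <| by
    rintro r ⟨φ, -, rfl⟩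
    positivity

theorem bddAbove_weakLp {p : ℝ} (hp : 0 < p) {m : ℕ} (x : Fin m → E) :
    BddAbove {r : ℝ | ∃ φ : StrongDual ℝ E, ‖φ‖ ≤ 1 ∧ r = (∑ j, |φ (x j)| ^ p) ^ (1 / p)} := by
  refine ⟨(∑ j, ‖x j‖ ^ p) ^ (1 / p), ?_⟩
  rintro r ⟨φ, hφ, rfl⟩
  have hφx : ∀ j, |φ (x j)| ≤ ‖x j‖ := fun j => by simpa using φ.le_of_opNorm_le hφ (x j)
  gcongr with j
  exact hφx j

theorem weakLp_map_le {q : ℝ} (hq : 0 < q) {u : E →L[ℝ] F} (hu : ‖u‖ ≤ 1) {m : ℕ}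
    (x : Fin m → E) : weakLp q (fun j => u (x j)) ≤ weakLp q x := by
  refine csSup_le ⟨_, 0, by simp, rfl⟩ ?_
  rintro r ⟨ψ, hψ, rfl⟩
  have hψu : ‖ψ.comp u‖ ≤ 1 := (ψ.opNorm_comp_le u).trans (mul_le_one₀ hψ (norm_nonneg u) hu)
  exact le_csSup (bddAbove_weakLp hq x) ⟨ψ.comp u, hψu, rfl⟩

theorem wpNorm_sum_tmul_le (p q : ℝ) {m : ℕ} (n : Fin m → E) (h : Fin m → F) :
    wpNorm p q (∑ j, n j ⊗ₜ[ℝ] h j) ≤ weakLp p n * weakLp q h :=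
  csInf_le ⟨0, by
    rintro r ⟨_, n', h', -, rfl⟩
    exact mul_nonneg (weakLp_nonneg _ _) (weakLp_nonneg _ _)⟩ ⟨m, n, h, rfl, rfl⟩

end WeakLp

section LipWeakLp

variable {Y : Type*} [MetricSpace Y]

/-- The weak `ℓ_p` norm of the molecules `δ(x_l) - δ(y_l)`, computed against the unit ball
of `Lip₀(Y)`. -/
noncomputable def lipWeakLp (p : ℝ) (y₀ : Y) {k : ℕ} (x y : Fin k → Y) : ℝ :=
  sSup {r : ℝ | ∃ s : Y → ℝ, LipschitzWith 1 s ∧ s y₀ = 0 ∧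
    r = (∑ l, |s (x l) - s (y l)| ^ p) ^ (1 / p)}

theorem bddAbove_lipWeakLp {p : ℝ} (hp : 0 < p) (y₀ : Y) {k : ℕ} (x y : Fin k → Y) :
    BddAbove {r : ℝ | ∃ s : Y → ℝ, LipschitzWith 1 s ∧ s y₀ = 0 ∧
      r = (∑ l, |s (x l) - s (y l)| ^ p) ^ (1 / p)} := by
  refine ⟨(∑ l, dist (x l) (y l) ^ p) ^ (1 / p), ?_⟩
  rintro r ⟨s, hs, -, rfl⟩
  have hsxy : ∀ l, |s (x l) - s (y l)| ≤ dist (x l) (y l) := fun l => by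
    simpa [Real.dist_eq] using hs.dist_le_mul (x l) (y l)
  gcongr with l
  exact hsxy l

theorem weakLp_sub_le_lipWeakLp {E : Type*} [NormedAddCommGroup E] [NormedSpace ℝ E]
    {p : ℝ} (hp : 0 < p) {y₀ : Y} {δ : Y → E} (hδ : LipschitzWith 1 δ) (hδ₀ : δ y₀ = 0)
    {k : ℕ} (x y : Fin k → Y) :
    weakLp p (fun l => δ (x l) - δ (y l)) ≤ lipWeakLp p y₀ x y := by
  refine csSup_le ⟨_, 0, by simp, rfl⟩ ?_
  rintro r ⟨φ, hφ, rfl⟩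
  have hφδ : LipschitzWith 1 (φ ∘ δ) := by
    simpa using (φ.lipschitz.weaken (by exact_mod_cast hφ)).comp hδ
  refine le_csSup (bddAbove_lipWeakLp hp y₀ x y) ⟨φ ∘ δ, hφδ, by simp [hδ₀], ?_⟩
  simp only [Function.comp_apply, map_sub]

end LipWeakLp

namespace IsFreeSpace

section Metric

variable {Y E : Type*} [MetricSpace Y] {y₀ : Y} [NormedAddCommGroup E] [NormedSpace ℝ E]
  [CompleteSpace E] {δ : Y → E}

theorem lipschitzWith_one (h : IsFreeSpace Y y₀ E δ) : LipschitzWith 1 δ :=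
  LipschitzWith.of_dist_le_mul fun x y => by simp [dist_eq_norm, h.isometry]

theorem abs_sum_mul_le_norm (h : IsFreeSpace Y y₀ E δ) {s : Y → ℝ} (hs : LipschitzWith 1 s)
    (hs₀ : s y₀ = 0) {n : ℕ} (a : Fin n → ℝ) (x : Fin n → Y) :
    |∑ i, a i * s (x i)| ≤ ‖∑ i, a i • δ (x i)‖ := by
  have hbdd : BddAbove {r : ℝ | ∃ t : Y → ℝ, LipschitzWith 1 t ∧ t y₀ = 0 ∧
      r = |∑ i, a i * t (x i)|} := by
    refine ⟨∑ i, |a i| * dist (x i) y₀, ?_⟩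
    rintro r ⟨t, ht, ht₀, rfl⟩
    have htx : ∀ i, |t (x i)| ≤ dist (x i) y₀ := fun i => by
      simpa [Real.dist_eq, ht₀] using ht.dist_le_mul (x i) y₀
    refine (abs_sum_le_sum_abs _ _).trans (sum_le_sum fun i _ => ?_)
    rw [abs_mul]
    exact mul_le_mul_of_nonneg_left (htx i) (abs_nonneg _)
  rw [h.norm_eq]
  exact le_csSup hbdd ⟨s, hs, hs₀, rfl⟩

end Metric

section Banach

variable {W FW : Type*} [NormedAddCommGroup W] [NormedSpace ℝ W]
  [NormedAddCommGroup FW] [NormedSpace ℝ FW] [CompleteSpace FW] {δ : W → FW}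

theorem norm_sum_smul_le (h : IsFreeSpace W 0 FW δ) {n : ℕ} (a : Fin n → ℝ) (x : Fin n → W) :
    ‖∑ i, a i • x i‖ ≤ ‖∑ i, a i • δ (x i)‖ := by
  obtain ⟨g, hg, hgz⟩ := exists_dual_vector'' ℝ (∑ i, a i • x i)
  rw [RCLike.ofReal_real_eq_id, id] at hgz
  have hg₁ : LipschitzWith 1 g := g.lipschitz.weaken (by exact_mod_cast hg)
  calc ‖∑ i, a i • x i‖ = ∑ i, a i * g (x i) := by
        rw [← hgz, map_sum]
        simp only [map_smul, smul_eq_mul]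
    _ ≤ |∑ i, a i * g (x i)| := le_abs_self _
    _ ≤ ‖∑ i, a i • δ (x i)‖ := h.abs_sum_mul_le_norm hg₁ (map_zero g) a x

theorem norm_linearCombination_le (h : IsFreeSpace W 0 FW δ) (c : W →₀ ℝ) :
    ‖Finsupp.linearCombination ℝ id c‖ ≤ ‖Finsupp.linearCombination ℝ δ c‖ := by
  simp only [Finsupp.linearCombination_apply, Finsupp.sum, ← c.support.sum_coe_sort,
    ← c.support.equivFin.symm.sum_comp]
  exact h.norm_sum_smul_le _ _

theorem exists_barycenter [CompleteSpace W] (h : IsFreeSpace W 0 FW δ) :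
    ∃ β : FW →L[ℝ] W, (∀ w, β (δ w) = w) ∧ ‖β‖ ≤ 1 := by
  set L := Finsupp.linearCombination ℝ δ
  have hdense : DenseRange L := by
    rw [DenseRange, ← LinearMap.coe_range, Finsupp.range_linearCombination,
      Submodule.dense_iff_topologicalClosure_eq_top]
    exact h.dense_span
  have hL : ∀ c, ‖Finsupp.linearCombination ℝ id c‖ ≤ 1 * ‖L c‖ := fun c => by
    simpa using h.norm_linearCombination_le c
  refine ⟨(Finsupp.linearCombination ℝ id).extendOfNorm L, fun w => ?_,
    LinearMap.opNorm_extendOfNorm_le hdense zero_le_one hL⟩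
  simpa [L] using LinearMap.extendOfNorm_eq hdense ⟨1, hL⟩ (Finsupp.single w 1)

end Banach

end IsFreeSpace

theorem msLipPNuclear_implies_lipschitzPNuclear_general
    {Y W FY FW : Type*} [MetricSpace Y] [Inhabited Y]
    [NormedAddCommGroup W] [NormedSpace ℝ W] [CompleteSpace W]
    [NormedAddCommGroup FY] [NormedSpace ℝ FY] [CompleteSpace FY]
    [NormedAddCommGroup FW] [NormedSpace ℝ FW] [CompleteSpace FW]
    {δY : Y → FY} {δW : W → FW}
    (hFY : IsFreeSpace Y default FY δY) (hFW : IsFreeSpace W 0 FW δW)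
    {p q : ℝ} (hpq : p.HolderConjugate q)
    (T : Y → W)
    (hMS : MSLipPNuclear p q δY δW T) :
    ∃ K > 0, ∀ (k : ℕ) (x y : Fin k → Y) (a : Fin k → StrongDual ℝ W),
      |∑ l, (a l (T (x l)) - a l (T (y l)))| ≤
        K * sSup {r : ℝ | ∃ s : Y → ℝ, LipschitzWith 1 s ∧ s default = 0 ∧
            r = (∑ l, |s (x l) - s (y l)| ^ p) ^ (1 / p)} *
          weakLp q a := by
  obtain ⟨β, hβδ, hβ⟩ := hFW.exists_barycenter
  obtain ⟨K, hK, hMS⟩ := hMS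
  refine ⟨K, hK, fun k x y a => ?_⟩
  set u : StrongDual ℝ W →L[ℝ] StrongDual ℝ FW := (ContinuousLinearMap.compL ℝ FW W ℝ).flip β
  have hu : ‖u‖ ≤ 1 := ((ContinuousLinearMap.compL ℝ FW W ℝ).flip.le_opNorm β).trans <| by
    rw [ContinuousLinearMap.opNorm_flip]
    exact mul_le_one₀ (ContinuousLinearMap.norm_compL_le ..) (norm_nonneg _) hβ
  have hmolecules := weakLp_sub_le_lipWeakLp hpq.pos hFY.lipschitzWith_one hFY.map_base x y
  calc |∑ l, (a l (T (x l)) - a l (T (y l)))|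
      = |∑ l, (u (a l) (δW (T (x l))) - u (a l) (δW (T (y l))))| := by simp [u, hβδ]
    _ ≤ K * wpNorm p q (∑ l, (δY (x l) - δY (y l)) ⊗ₜ[ℝ] u (a l)) := hMS k x y _
    _ ≤ K * (weakLp p (fun l => δY (x l) - δY (y l)) * weakLp q (fun l => u (a l))) := by
        gcongr
        exact wpNorm_sum_tmul_le p q _ _
    _ ≤ K * (lipWeakLp p default x y * weakLp q a) := by
        gcongr
        · exact weakLp_nonneg _ _
        · exact (weakLp_nonneg _ _).trans hmolecules
        · exact weakLp_map_le hpq.symm.pos hu a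
    _ = K * lipWeakLp p default x y * weakLp q a := (mul_assoc _ _ _).symm

/-- for `W` a Banach space, every MS-Lipschitz `p`-nuclear operator
`T : Y → W` is (Cohen) Lipschitz `p`-nuclear. -/
theorem msLipPNuclear_implies_lipschitzPNuclear
    {Y W FY FW : Type*} [MetricSpace Y] [Inhabited Y]
    [NormedAddCommGroup W] [NormedSpace ℝ W] [CompleteSpace W]
    [NormedAddCommGroup FY] [NormedSpace ℝ FY] [CompleteSpace FY]
    [NormedAddCommGroup FW] [NormedSpace ℝ FW] [CompleteSpace FW]
    {δY : Y → FY} {δW : W → FW}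
    (hFY : IsFreeSpace Y default FY δY) (hFW : IsFreeSpace W 0 FW δW)
    {p q : ℝ} (hpq : p.HolderConjugate q)
    (T : Y → W) (hTlip : ∃ K, LipschitzWith K T) (hT0 : T default = 0)
    (hMS : MSLipPNuclear p q δY δW T) :
    ∃ K > 0, ∀ (k : ℕ) (x y : Fin k → Y) (a : Fin k → StrongDual ℝ W),
      |∑ l, (a l (T (x l)) - a l (T (y l)))| ≤
        K * sSup {r : ℝ | ∃ s : Y → ℝ, LipschitzWith 1 s ∧ s default = 0 ∧
            r = (∑ l, |s (x l) - s (y l)| ^ p) ^ (1 / p)} *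
          weakLp q a :=
  msLipPNuclear_implies_lipschitzPNuclear_general hFY hFW hpq T hMS
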